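/- arXiv:2110.07352 — 4 statements merged into one kernel-verified Lean document; each statement's English description precedes it below -/
import Mathlib

section
/- Let γ(r_1,…,r_N) = (ρ(r_1)/N) ∏_{i=2}^N γ_i(r_1,r_i). Then γ is a nonnegative measurable function on Ω^N with ∫_{Ω^N} γ = 1, and for every i ∈ {1,…,N} the i-th marginal of γ satisfies Π_iγ(r) = ρ(r)/N for a.e. r ∈ Ω, where Π_iγ(r) := ∫_{Ω^{N-1}} γ(r_1,…,r_{i-1},r,r_{i+1},…,r_N) dr_1⋯dr_{i-1} dr_{i+1}⋯dr_N. -/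
open MeasureTheory ENNReal BigOperators

section AuxLemmas

variable {α : Type*} [MeasurableSpace α]

theorem lintegral_pi_fin_prod {n : ℕ} (μ : Measure α) [SigmaFinite μ]
    (f : Fin n → α → ℝ≥0∞) (hf : ∀ i, Measurable (f i)) :
    ∫⁻ y, (∏ i, f i (y i)) ∂(Measure.pi fun _ : Fin n => μ) = ∏ i, ∫⁻ x, f i x ∂μ := by
  induction n with
  | zero => simp
  | succ n ih =>
    have hmeas : Measurable fun y : Fin (n + 1) → α => ∏ i, f i (y i) :=
      Finset.measurable_prod _ fun i _ => (hf i).comp (measurable_pi_apply i)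
    have h := (measurePreserving_piFinSuccAbove (fun _ : Fin (n + 1) => μ) 0).symm
    rw [← h.lintegral_comp hmeas]
    have key : ∀ w : α × (Fin n → α),
        (∏ i, f i (((MeasurableEquiv.piFinSuccAbove (fun _ : Fin (n + 1) => α) 0).symm w) i)) =
          f 0 w.1 * ∏ i : Fin n, f i.succ (w.2 i) := by
      intro w
      simp [MeasurableEquiv.piFinSuccAbove_symm_apply, Fin.insertNthEquiv,
        Fin.prod_univ_succ, Fin.insertNth_zero, Fin.cons_zero,
        Fin.zero_succAbove, Fin.cons_succ]
    simp_rw [key]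
    have hmul := lintegral_prod_mul (μ := μ) (ν := Measure.pi fun _ : Fin n => μ)
      (f := f 0) (g := fun v => ∏ i : Fin n, f i.succ (v i)) (hf 0).aemeasurable
      (Finset.measurable_prod _ fun i _ =>
        (hf i.succ).comp (measurable_pi_apply i)).aemeasurable
    exact hmul.trans (by rw [ih (fun i => f i.succ) fun i => hf i.succ, Fin.prod_univ_succ])

theorem lintegral_pi_fintype_prod {ι : Type*} [Fintype ι] (μ : Measure α) [SigmaFinite μ]
    (f : ι → α → ℝ≥0∞) (hf : ∀ i, Measurable (f i)) :
    ∫⁻ y, (∏ i, f i (y i)) ∂(Measure.pi fun _ : ι => μ) = ∏ i, ∫⁻ x, f i x ∂μ := by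
  let e := (Fintype.equivFin ι).symm
  have h := measurePreserving_piCongrLeft (fun _ : ι => μ) e
  have hmeas : Measurable fun y : ι → α => ∏ i, f i (y i) :=
    Finset.measurable_prod _ fun i _ => (hf i).comp (measurable_pi_apply i)
  rw [← h.lintegral_comp hmeas, ← e.prod_comp fun i => ∫⁻ x, f i x ∂μ,
    ← lintegral_pi_fin_prod μ (fun j => f (e j)) fun j => hf (e j)]
  refine lintegral_congr fun y => ?_
  rw [← e.prod_comp fun i => f i ((MeasurableEquiv.piCongrLeft (fun _ => α) e) y i)]
  exact Finset.prod_congr rfl fun j _ => by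
    simp [MeasurableEquiv.coe_piCongrLeft, Equiv.piCongrLeft_apply_apply]

theorem lintegral_pi_split {ι : Type*} [Fintype ι] [DecidableEq ι] (i0 : ι)
    (μ : Measure α) [SigmaFinite μ] (F : (ι → α) → ℝ≥0∞) (hF : Measurable F) :
    ∫⁻ z, F z ∂(Measure.pi fun _ : ι => μ) =
      ∫⁻ x, (∫⁻ y, F (fun j => if h : j = i0 then x else y ⟨j, h⟩)
        ∂(Measure.pi fun _ : {j : ι // j ≠ i0} => μ)) ∂μ := by
  haveI : Unique {j : ι // j = i0} := ⟨⟨⟨i0, rfl⟩⟩, fun a => Subtype.ext a.2⟩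
  set e := MeasurableEquiv.piEquivPiSubtypeProd (fun _ : ι => α) (fun j => j = i0) with he
  have h := (measurePreserving_piEquivPiSubtypeProd (fun _ : ι => μ) (fun j => j = i0)).symm
  have hFe : Measurable fun w : ({j : ι // j = i0} → α) × ({j : ι // ¬ j = i0} → α) =>
      F (e.symm w) := hF.comp e.symm.measurable
  rw [← h.lintegral_comp hF, lintegral_prod _ hFe.aemeasurable]
  have hu := (@measurePreserving_piUnique {j : ι // j = i0} (Subtype.fintype _)
    (fun _ => α) _ (fun _ => ‹MeasurableSpace α›) (fun _ => μ)).symm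
  have hH : Measurable fun u : {j : ι // j = i0} → α =>
      ∫⁻ v, F (e.symm (u, v)) ∂(Measure.pi fun _ : {j : ι // ¬ j = i0} => μ) :=
    Measurable.lintegral_prod_right' hFe
  refine Eq.trans (hu.lintegral_comp hH).symm ?_
  refine lintegral_congr fun x => lintegral_congr fun v => congrArg F (funext fun j => ?_)
  by_cases hj : j = i0
  · simp [e, MeasurableEquiv.piEquivPiSubtypeProd, Equiv.piEquivPiSubtypeProd, hj,
      MeasurableEquiv.piUnique, Equiv.piUnique, uniqueElim_const]
  · simp [e, MeasurableEquiv.piEquivPiSubtypeProd, Equiv.piEquivPiSubtypeProd, hj]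

theorem lintegral_pi_split_prod {ι : Type*} [Fintype ι] [DecidableEq ι] (i0 : ι)
    (μ : Measure α) [SigmaFinite μ] (φ : α → ℝ≥0∞) (hφ : Measurable φ)
    (f : ι → α → α → ℝ≥0∞) (hf : ∀ j, j ≠ i0 → Measurable (Function.uncurry (f j))) :
    ∫⁻ z, (φ (z i0) * ∏ j ∈ Finset.univ.erase i0, f j (z i0) (z j))
        ∂(Measure.pi fun _ : ι => μ) =
      ∫⁻ x, (φ x * ∏ j ∈ Finset.univ.erase i0, ∫⁻ x', f j x x' ∂μ) ∂μ := by
  have hFm : Measurable fun z : ι → α =>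
      φ (z i0) * ∏ j ∈ Finset.univ.erase i0, f j (z i0) (z j) := by
    refine (hφ.comp (measurable_pi_apply i0)).mul ?_
    refine Finset.measurable_prod _ fun j hj => ?_
    exact ((hf j (Finset.ne_of_mem_erase hj)).comp
      ((measurable_pi_apply i0).prodMk (measurable_pi_apply j)) :
      Measurable fun z : ι → α => Function.uncurry (f j) (z i0, z j))
  rw [lintegral_pi_split i0 μ _ hFm]
  refine lintegral_congr fun x => ?_
  have key : ∀ y : {j : ι // j ≠ i0} → α,
      (fun z : ι → α => φ (z i0) * ∏ j ∈ Finset.univ.erase i0, f j (z i0) (z j))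
        (fun j => if h : j = i0 then x else y ⟨j, h⟩) =
      φ x * ∏ jj : {j : ι // j ≠ i0}, f jj.1 x (y jj) := by
    intro y
    show φ _ * _ = _
    set z : ι → α := fun j => if h : j = i0 then x else y ⟨j, h⟩ with hz
    have hz0 : z i0 = x := dif_pos rfl
    have hzj : ∀ jj : {j : ι // j ≠ i0}, z jj.1 = y jj := fun jj => by
      show dite _ _ _ = _
      rw [dif_neg jj.2]
    rw [hz0, Finset.prod_subtype (Finset.univ.erase i0) (p := fun j => j ≠ i0)
      (fun j => by simp) (fun j => f j x (z j))]
    exact congrArg _ (Finset.prod_congr rfl fun jj _ => by rw [hzj jj])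
  have hfm' : ∀ jj : {j : ι // j ≠ i0}, Measurable (f jj.1 x) := fun jj =>
    ((hf jj.1 jj.2).comp measurable_prodMk_left :
      Measurable fun x' => Function.uncurry (f jj.1) (x, x'))
  calc ∫⁻ y, (fun z : ι → α => φ (z i0) * ∏ j ∈ Finset.univ.erase i0, f j (z i0) (z j))
        (fun j => if h : j = i0 then x else y ⟨j, h⟩)
        ∂(Measure.pi fun _ : {j : ι // j ≠ i0} => μ)
      = ∫⁻ y, (φ x * ∏ jj : {j : ι // j ≠ i0}, f jj.1 x (y jj))
          ∂(Measure.pi fun _ : {j : ι // j ≠ i0} => μ) := lintegral_congr key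
    _ = φ x * ∫⁻ y, (∏ jj : {j : ι // j ≠ i0}, f jj.1 x (y jj))
          ∂(Measure.pi fun _ : {j : ι // j ≠ i0} => μ) := by
        have hprodm : Measurable fun y : {j : ι // j ≠ i0} → α =>
            ∏ jj : {j : ι // j ≠ i0}, f jj.1 x (y jj) :=
          Finset.measurable_prod _ fun jj _ =>
            ((hfm' jj).comp (measurable_pi_apply jj) :
              Measurable fun y : {j : ι // j ≠ i0} → α => f jj.1 x (y jj))
        rw [lintegral_const_mul _ hprodm]
    _ = φ x * ∏ jj : {j : ι // j ≠ i0}, ∫⁻ x', f jj.1 x x' ∂μ := by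
        rw [lintegral_pi_fintype_prod (ι := {j : ι // j ≠ i0}) μ (fun jj => f jj.1 x) hfm']
    _ = φ x * ∏ j ∈ Finset.univ.erase i0, ∫⁻ x', f j x x' ∂μ := by
        rw [Finset.prod_subtype (Finset.univ.erase i0) (p := fun j => j ≠ i0)
          (fun j => by simp) (fun j => ∫⁻ x', f j x x' ∂μ)]

end AuxLemmas
/-- Let `γ(r₁,…,r_N) = (ρ(r₁)/N) ∏_{i=2}^N γ_i(r₁,r_i)`.  Then `γ` is a nonnegative
measurable function on `Ω^N` (nonnegativity is automatic since `γ` takes values in `ℝ≥0∞`)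
with `∫_{Ω^N} γ = 1`, and for every `i` the `i`-th marginal of `γ` equals `ρ/N` a.e. on `Ω`. -/
theorem marginals_of_product_ansatz
    (d N : ℕ) [NeZero N] (hd : 1 ≤ d) (hN : 2 ≤ N)
    (Ω : Set (EuclideanSpace ℝ (Fin d))) (hΩm : MeasurableSet Ω)
    (hΩb : Bornology.IsBounded Ω)
    (ρ : EuclideanSpace ℝ (Fin d) → ℝ≥0∞) (hρ : Measurable ρ)
    (hρmass : ∫⁻ x in Ω, ρ x = N)
    (g : Fin N → EuclideanSpace ℝ (Fin d) → EuclideanSpace ℝ (Fin d) → ℝ≥0∞)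
    (hgm : ∀ i : Fin N, i ≠ 0 → Measurable (Function.uncurry (g i)))
    (hg1 : ∀ i : Fin N, i ≠ 0 →
      ∀ᵐ r ∂(volume.restrict Ω), ∫⁻ r' in Ω, g i r r' = 1)
    (hg2 : ∀ i : Fin N, i ≠ 0 →
      ∀ᵐ r' ∂(volume.restrict Ω), ∫⁻ r in Ω, ρ r * g i r r' = ρ r')
    (γ : (Fin N → EuclideanSpace ℝ (Fin d)) → ℝ≥0∞)
    (hγ : γ = fun r => (ρ (r 0) / (N : ℝ≥0∞)) *
      ∏ i ∈ Finset.univ.erase (0 : Fin N), g i (r 0) (r i)) :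
    Measurable γ ∧
    (∫⁻ r, γ r ∂(Measure.pi fun _ : Fin N => volume.restrict Ω)) = 1 ∧
    ∀ i : Fin N, ∀ᵐ r ∂(volume.restrict Ω),
      (∫⁻ y, γ (fun j => if h : j = i then r else y ⟨j, h⟩)
          ∂(Measure.pi fun _ : {j : Fin N // j ≠ i} => volume.restrict Ω)) = ρ r / (N : ℝ≥0∞) := by
  have hN0 : (N : ℝ≥0∞) ≠ 0 := Nat.cast_ne_zero.2 (NeZero.ne N)
  have hNtop : (N : ℝ≥0∞) ≠ ⊤ := ENNReal.natCast_ne_top N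
  set μ : Measure (EuclideanSpace ℝ (Fin d)) := volume.restrict Ω with hμdef
  have hγm : Measurable γ := by
    rw [hγ]
    refine ((hρ.comp (measurable_pi_apply 0)).div_const _).mul ?_
    refine Finset.measurable_prod _ fun i hi => ?_
    exact ((hgm i (Finset.ne_of_mem_erase hi)).comp
      ((measurable_pi_apply 0).prodMk (measurable_pi_apply i)) :
      Measurable fun r : Fin N → EuclideanSpace ℝ (Fin d) =>
        Function.uncurry (g i) (r 0, r i))
  have H : ∀ᵐ x ∂μ, ∀ j : Fin N, j ≠ 0 → (∫⁻ x', g j x x' ∂μ) = 1 := by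
    rw [ae_all_iff]
    intro j
    by_cases hj : j = 0
    · exact Filter.Eventually.of_forall fun x h => absurd hj h
    · exact (hg1 j hj).mono fun x hx _ => hx
  have hprod1 : ∀ᵐ x ∂μ, ∏ j ∈ Finset.univ.erase (0 : Fin N), (∫⁻ x', g j x x' ∂μ) = 1 :=
    H.mono fun x hx => Finset.prod_eq_one fun j hj => hx j (Finset.ne_of_mem_erase hj)
  have hφ0 : Measurable fun x : EuclideanSpace ℝ (Fin d) => ρ x / (N : ℝ≥0∞) :=
    hρ.div_const _
  have key2 : (∫⁻ r, γ r ∂(Measure.pi fun _ : Fin N => μ)) =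
      ∫⁻ x, ((ρ x / (N : ℝ≥0∞)) *
        ∏ j ∈ Finset.univ.erase (0 : Fin N), ∫⁻ x', g j x x' ∂μ) ∂μ := by
    rw [hγ]
    exact lintegral_pi_split_prod (0 : Fin N) μ (fun x => ρ x / (N : ℝ≥0∞)) hφ0 g hgm
  have part2 : (∫⁻ r, γ r ∂(Measure.pi fun _ : Fin N => μ)) = 1 := by
    rw [key2]
    have hcongr : (fun x => (ρ x / (N : ℝ≥0∞)) *
        ∏ j ∈ Finset.univ.erase (0 : Fin N), ∫⁻ x', g j x x' ∂μ)
        =ᵐ[μ] fun x => ρ x / (N : ℝ≥0∞) := hprod1.mono fun x hx => by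
      simp only [hx, mul_one]
    rw [lintegral_congr_ae hcongr]
    simp_rw [div_eq_mul_inv]
    rw [lintegral_mul_const _ hρ, hρmass, ENNReal.mul_inv_cancel hN0 hNtop]
  refine ⟨hγm, part2, ?_⟩
  intro i
  by_cases hi : i = 0
  · subst hi
    have hfm' : ∀ r, ∀ jj : {j : Fin N // j ≠ (0 : Fin N)}, Measurable (g jj.1 r) :=
      fun r jj => ((hgm jj.1 jj.2).comp measurable_prodMk_left :
        Measurable fun x' => Function.uncurry (g jj.1) (r, x'))
    have eval0 : ∀ r, (∫⁻ y, γ (fun j => if h : j = (0 : Fin N) then r else y ⟨j, h⟩)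
        ∂(Measure.pi fun _ : {j : Fin N // j ≠ (0 : Fin N)} => μ)) =
        (ρ r / (N : ℝ≥0∞)) *
          ∏ j ∈ Finset.univ.erase (0 : Fin N), ∫⁻ x', g j r x' ∂μ := by
      intro r
      have key : ∀ y : {j : Fin N // j ≠ (0 : Fin N)} → EuclideanSpace ℝ (Fin d),
          γ (fun j => if h : j = (0 : Fin N) then r else y ⟨j, h⟩) =
          (ρ r / (N : ℝ≥0∞)) *
            ∏ jj : {j : Fin N // j ≠ (0 : Fin N)}, g jj.1 r (y jj) := by
        intro y
        rw [hγ]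
        set z : Fin N → EuclideanSpace ℝ (Fin d) :=
          fun j => if h : j = (0 : Fin N) then r else y ⟨j, h⟩ with hz
        show ρ (z 0) / (N : ℝ≥0∞) * _ = _
        have hz0 : z 0 = r := dif_pos rfl
        have hzj : ∀ jj : {j : Fin N // j ≠ (0 : Fin N)}, z jj.1 = y jj := fun jj => by
          show dite _ _ _ = _
          rw [dif_neg jj.2]
        rw [hz0, Finset.prod_subtype (Finset.univ.erase (0 : Fin N))
          (p := fun j => j ≠ (0 : Fin N)) (fun j => by simp) (fun j => g j r (z j))]
        exact congrArg _ (Finset.prod_congr rfl fun jj _ => by rw [hzj jj])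
      refine (lintegral_congr key).trans ?_
      have hprodm : Measurable fun y : {j : Fin N // j ≠ (0 : Fin N)} → EuclideanSpace ℝ (Fin d) =>
          ∏ jj : {j : Fin N // j ≠ (0 : Fin N)}, g jj.1 r (y jj) :=
        Finset.measurable_prod _ fun jj _ =>
          ((hfm' r jj).comp (measurable_pi_apply jj) :
            Measurable fun y : {j : Fin N // j ≠ (0 : Fin N)} → EuclideanSpace ℝ (Fin d) =>
              g jj.1 r (y jj))
      rw [lintegral_const_mul _ hprodm,
        lintegral_pi_fintype_prod (ι := {j : Fin N // j ≠ (0 : Fin N)}) μ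
          (fun jj => g jj.1 r) (hfm' r)]
      congr 1
      rw [Finset.prod_subtype (Finset.univ.erase (0 : Fin N))
        (p := fun j => j ≠ (0 : Fin N)) (fun j => by simp) (fun j => ∫⁻ x', g j r x' ∂μ)]
    filter_upwards [hprod1] with r hr
    rw [eval0 r, hr, mul_one]
  · have h0i : (0 : Fin N) ≠ i := fun h => hi h.symm
    set q0 : {j : Fin N // j ≠ i} := ⟨0, h0i⟩ with hq0
    have himem : i ∈ Finset.univ.erase (0 : Fin N) :=
      Finset.mem_erase.2 ⟨hi, Finset.mem_univ i⟩
    have hgir : ∀ r, Measurable fun x => g i x r := fun r =>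
      ((hgm i hi).comp (measurable_id.prodMk measurable_const) :
        Measurable fun x => Function.uncurry (g i) (x, r))
    have evali : ∀ r, (∫⁻ y, γ (fun j => if h : j = i then r else y ⟨j, h⟩)
        ∂(Measure.pi fun _ : {j : Fin N // j ≠ i} => μ)) =
        ∫⁻ x, ((ρ x / (N : ℝ≥0∞) * g i x r) *
          ∏ k ∈ Finset.univ.erase q0, ∫⁻ x', g k.1 x x' ∂μ) ∂μ := by
      intro r
      have key : ∀ y : {j : Fin N // j ≠ i} → EuclideanSpace ℝ (Fin d),
          γ (fun j => if h : j = i then r else y ⟨j, h⟩) =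
          (ρ (y q0) / (N : ℝ≥0∞) * g i (y q0) r) *
            ∏ k ∈ Finset.univ.erase q0, g k.1 (y q0) (y k) := by
        intro y
        rw [hγ]
        set z : Fin N → EuclideanSpace ℝ (Fin d) :=
          fun j => if h : j = i then r else y ⟨j, h⟩ with hz
        show ρ (z 0) / (N : ℝ≥0∞) * _ = _
        have hz0 : z 0 = y q0 := by
          show dite _ _ _ = _
          rw [dif_neg h0i]
        have hzi : z i = r := dif_pos rfl
        have hzk : ∀ k : {j : Fin N // j ≠ i}, z k.1 = y k := fun k => by
          show dite _ _ _ = _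
          rw [dif_neg k.2]
        have hset : ((Finset.univ.erase q0).image Subtype.val) =
            (Finset.univ.erase (0 : Fin N)).erase i := by
          ext j
          simp only [Finset.mem_image, Finset.mem_erase, Finset.mem_univ, and_true,
            Subtype.exists, Subtype.ext_iff, hq0]
          aesop
        rw [hz0, ← Finset.mul_prod_erase _ _ himem, hzi, ← mul_assoc]
        congr 1
        calc ∏ j ∈ (Finset.univ.erase (0 : Fin N)).erase i, g j (y q0) (z j)
            = ∏ j ∈ (Finset.univ.erase q0).image Subtype.val, g j (y q0) (z j) := by
              rw [hset]
          _ = ∏ k ∈ Finset.univ.erase q0, g k.1 (y q0) (z k.1) :=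
              Finset.prod_image (fun a _ b _ h => Subtype.ext h)
          _ = ∏ k ∈ Finset.univ.erase q0, g k.1 (y q0) (y k) :=
              Finset.prod_congr rfl fun k _ => by rw [hzk k]
      refine (lintegral_congr key).trans ?_
      exact lintegral_pi_split_prod q0 μ (fun x => ρ x / (N : ℝ≥0∞) * g i x r)
        ((hρ.div_const _).mul (hgir r)) (fun k => g k.1)
        (fun k hk => hgm k.1 fun h0 => hk (by exact Subtype.ext h0))
    have evali2 : ∀ r, (∫⁻ y, γ (fun j => if h : j = i then r else y ⟨j, h⟩)
        ∂(Measure.pi fun _ : {j : Fin N // j ≠ i} => μ)) =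
        ∫⁻ x, (ρ x / (N : ℝ≥0∞) * g i x r) ∂μ := by
      intro r
      rw [evali r]
      refine lintegral_congr_ae (H.mono fun x hx => ?_)
      have hone : ∏ k ∈ Finset.univ.erase q0, ∫⁻ x', g k.1 x x' ∂μ = 1 :=
        Finset.prod_eq_one fun k hk =>
          hx k.1 fun h0 => (Finset.mem_erase.1 hk).1 (by exact Subtype.ext h0)
      simp only [hone, mul_one]
    filter_upwards [hg2 i hi] with r hr
    rw [evali2 r]
    have hrw : ∀ x, ρ x / (N : ℝ≥0∞) * g i x r = ρ x * g i x r * (N : ℝ≥0∞)⁻¹ := fun x => by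
      rw [div_eq_mul_inv, mul_right_comm]
    simp_rw [hrw]
    rw [lintegral_mul_const (f := fun x => ρ x * g i x r) _ (hρ.mul (hgir r)), hr, div_eq_mul_inv]
end

section
/- Let γ(r_1,…,r_N) = (ρ(r_1)/N) ∏_{i=2}^N γ_i(r_1,r_i) and let c(r_1,…,r_N) = Σ_{1≤i<j≤N} 1/|r_i − r_j| be the Coulomb cost. Then ∫_{Ω^N} c(r_1,…,r_N) γ(r_1,…,r_N) dr_1⋯dr_N = (1/N) [ Σ_{2≤i<j≤N} ∫_Ω∫_Ω∫_Ω ρ(r)γ_i(r,r')γ_j(r,r'') / |r'−r''| dr dr' dr'' + Σ_{i=2}^N ∫_Ω∫_Ω ρ(r)γ_i(r,r') / |r−r'| dr dr' ] (as an identity in [0,∞]). -/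
/-!
Under the product ansatz the coordinates `r k`, `k ≠ 0`, are conditionally independent given
`r 0`, with densities `g k (r 0) ·` that integrate to `1` for a.e. `r 0`. A pair term of the cost
depends only on `r 0`, `r i`, `r j`, so every other coordinate integrates out to `1`: the pairs
`(0, j)` leave double integrals and the pairs `(i, j)` with `0 < i` leave triple integrals.
-/

open MeasureTheory ENNReal Finset Function

section ProductKernel

variable {ι E : Type*}

theorem DependsOn.apply_update_of_notMem [DecidableEq ι] {β : Type*} {f : (ι → E) → β}
    {s : Set ι} (hf : DependsOn f s) {i : ι} (hi : i ∉ s) (r : ι → E) (t : E) :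
    f (Function.update r i t) = f r :=
  hf fun _ hj => Function.update_of_ne (ne_of_mem_of_not_mem hj hi) _ _

variable [MeasurableSpace E] {μ : Measure E}

theorem Measurable.comp_eval_eval {f : E → E → ℝ≥0∞} (hf : Measurable (uncurry f))
    (a b : ι) : Measurable fun r : ι → E => f (r a) (r b) :=
  hf.comp (f := fun r : ι → E => (r a, r b)) (by fun_prop)

variable [DecidableEq ι] [SigmaFinite μ]

theorem lmarginal_mul_prod_eq_mul_prod_lintegral {o : ι} {s : Finset ι} (hos : o ∉ s)
    {h : ι → E → E → ℝ≥0∞} (hh : ∀ k ∈ s, Measurable (uncurry (h k)))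
    {C : (ι → E) → ℝ≥0∞} (hCm : Measurable C) (hC : DependsOn C (↑s)ᶜ) :
    (∫⋯∫⁻_s, (fun r => C r * ∏ k ∈ s, h k (r o) (r k)) ∂fun _ => μ)
      = fun r => C r * ∏ k ∈ s, ∫⁻ t, h k (r o) t ∂μ := by
  induction s using Finset.induction generalizing C with
  | empty => simp
  | insert m s hm ih =>
    have hom : o ≠ m := fun e => hos (e ▸ mem_insert_self m s)
    have hhm := hh m (mem_insert_self m s)
    have hs : ∀ k ∈ s, Measurable (uncurry (h k)) := fun k hk => hh k (mem_insert_of_mem hk)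
    have hCm' : Measurable fun r : ι → E => C r * h m (r o) (r m) :=
      hCm.mul (hhm.comp_eval_eval o m)
    have hC' : DependsOn (fun r : ι → E => C r * h m (r o) (r m)) (↑s)ᶜ := by
      intro x y hxy
      have hos' : o ∉ s := fun h => hos (mem_insert_of_mem h)
      dsimp only
      rw [hC fun i hi => hxy i fun h => hi (mem_insert_of_mem h), hxy o hos', hxy m hm]
    ext r
    simp_rw [prod_insert hm, ← mul_assoc]
    rw [lmarginal_insert _ (hCm'.fun_mul (Finset.measurable_prod _ fun k hk =>
        (hs k hk).comp_eval_eval o k)) hm,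
      ih (fun h => hos (mem_insert_of_mem h)) hs hCm' hC']
    have hCr : ∀ t, C (update r m t) = C r := DependsOn.apply_update_of_notMem hC (by simp) r
    simp only [hCr, update_of_ne hom, update_self]
    rw [lintegral_mul_const _ (hhm.of_uncurry_left.const_mul _),
      lintegral_const_mul _ hhm.of_uncurry_left]

variable [Fintype ι] {g : ι → E → E → ℝ≥0∞} {o : ι}

theorem lintegral_pi_mul_prod_eq_lintegral_lmarginal
    (hg : ∀ k, k ≠ o → Measurable (uncurry (g k)))
    (hg1 : ∀ k, k ≠ o → ∀ᵐ a ∂μ, ∫⁻ t, g k a t ∂μ = 1)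
    {U : Finset ι} (hoU : o ∉ U) {Ψ : (ι → E) → ℝ≥0∞} (hΨm : Measurable Ψ)
    (hΨ : DependsOn Ψ ↑(insert o U)) (x : ι → E) :
    ∫⁻ r, Ψ r * ∏ k ∈ univ.erase o, g k (r o) (r k) ∂(Measure.pi fun _ => μ)
      = ∫⁻ a, (∫⋯∫⁻_U, (fun r => Ψ r * ∏ k ∈ U, g k (r o) (r k)) ∂fun _ => μ)
          (update x o a) ∂μ := by
  set S := univ.erase o \ U
  have hUo : U ⊆ univ.erase o := fun k hk => mem_erase.2 ⟨fun e => hoU (e ▸ hk), mem_univ k⟩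
  have hS : ∀ k ∈ S, k ≠ o ∧ k ∉ U := fun k hk => by simpa [S] using hk
  have hSU : Disjoint (insert o U) S := by
    rw [disjoint_insert_left]
    exact ⟨fun h => (hS o h).1 rfl, disjoint_sdiff⟩
  have huniv : insert o U ∪ S = univ := by
    rw [insert_union, union_sdiff_of_subset hUo, insert_erase (mem_univ o)]
  set C := fun r : ι → E => Ψ r * ∏ k ∈ U, g k (r o) (r k)
  have hCm : Measurable C :=
    hΨm.mul (Finset.measurable_prod _ fun k hk =>
      (hg k (fun e => hoU (e ▸ hk))).comp_eval_eval o k)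
  have hC : DependsOn C (↑S)ᶜ := by
    intro x y hxy
    have hxyU : ∀ k ∈ insert o U, x k = y k := fun k hk => hxy k (disjoint_left.1 hSU hk)
    simp only [C, hΨ hxyU, hxyU o (mem_insert_self o U)]
    congr 1
    exact prod_congr rfl fun k hk => by rw [hxyU k (mem_insert_of_mem hk)]
  set P := fun a => ∏ k ∈ S, ∫⁻ t, g k a t ∂μ
  have hPm : Measurable P :=
    Finset.measurable_prod _ fun k hk => (hg k (hS k hk).1).lintegral_prod_right
  have hP : ∀ᵐ a ∂μ, P a = 1 := by
    have : ∀ᵐ a ∂μ, ∀ k ∈ S, ∫⁻ t, g k a t ∂μ = 1 :=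
      (Filter.eventually_all_finset S).2 fun k hk => hg1 k (hS k hk).1
    exact this.mono fun a ha => prod_eq_one ha
  have hCPm : Measurable fun r : ι → E => C r * P (r o) :=
    hCm.mul (hPm.comp (measurable_pi_apply o))
  calc ∫⁻ r, Ψ r * ∏ k ∈ univ.erase o, g k (r o) (r k) ∂(Measure.pi fun _ => μ)
      = (∫⋯∫⁻_(insert o U ∪ S), (fun r => C r * ∏ k ∈ S, g k (r o) (r k))
          ∂fun _ => μ) x := by
        rw [huniv, ← lintegral_eq_lmarginal_univ]
        refine lintegral_congr fun r => ?_
        rw [← prod_sdiff hUo, mul_comm (∏ k ∈ S, _), mul_assoc]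
    _ = (∫⋯∫⁻_(insert o U), (fun r => C r * P (r o)) ∂fun _ => μ) x := by
        rw [lmarginal_union _ _ (hCm.fun_mul (Finset.measurable_prod _ fun k hk =>
            (hg k (hS k hk).1).comp_eval_eval o k)) hSU,
          lmarginal_mul_prod_eq_mul_prod_lintegral (fun h => (hS o h).1 rfl)
            (fun k hk => hg k (hS k hk).1) hCm hC]
    _ = ∫⁻ a, (∫⋯∫⁻_U, C ∂fun _ => μ) (update x o a) ∂μ := by
        rw [lmarginal_insert _ hCPm hoU]
        refine lintegral_congr_ae (hP.mono fun a ha => ?_)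
        dsimp only
        rw [lmarginal_update_of_notMem hCPm hoU, lmarginal_update_of_notMem hCm hoU]
        simp only [comp_def, update_self, ha, mul_one]

variable [Nonempty E]

theorem lintegral_pi_eval₂_mul_prod (hg : ∀ k, k ≠ o → Measurable (uncurry (g k)))
    (hg1 : ∀ k, k ≠ o → ∀ᵐ a ∂μ, ∫⁻ t, g k a t ∂μ = 1) {j : ι} (hj : j ≠ o)
    {F : E → E → ℝ≥0∞} (hF : Measurable (uncurry F)) :
    ∫⁻ r, F (r o) (r j) * ∏ k ∈ univ.erase o, g k (r o) (r k) ∂(Measure.pi fun _ => μ)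
      = ∫⁻ a, ∫⁻ b, F a b * g j a b ∂μ ∂μ := by
  rw [lintegral_pi_mul_prod_eq_lintegral_lmarginal hg hg1 (U := {j}) (by simpa using hj.symm)
    (hF.comp_eval_eval o j) (fun x y h => congrArg₂ F (h o (by simp)) (h j (by simp)))
    (fun _ => Classical.arbitrary E)]
  refine lintegral_congr fun a => ?_
  rw [lmarginal_singleton]
  simp [hj.symm]

theorem lintegral_pi_eval₃_mul_prod (hg : ∀ k, k ≠ o → Measurable (uncurry (g k)))
    (hg1 : ∀ k, k ≠ o → ∀ᵐ a ∂μ, ∫⁻ t, g k a t ∂μ = 1) {i j : ι} (hi : i ≠ o)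
    (hj : j ≠ o) (hij : i ≠ j) {F : E → E → E → ℝ≥0∞}
    (hF : Measurable fun p : E × E × E => F p.1 p.2.1 p.2.2) :
    ∫⁻ r, F (r o) (r i) (r j) * ∏ k ∈ univ.erase o, g k (r o) (r k)
        ∂(Measure.pi fun _ => μ)
      = ∫⁻ a, ∫⁻ b, ∫⁻ c, F a b c * g i a b * g j a c ∂μ ∂μ ∂μ := by
  have hFm : Measurable fun r : ι → E => F (r o) (r i) (r j) :=
    hF.comp (f := fun r : ι → E => (r o, r i, r j)) (by fun_prop)
  rw [lintegral_pi_mul_prod_eq_lintegral_lmarginal hg hg1 (U := {i, j})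
    (by simp [hi.symm, hj.symm]) hFm
    (fun x y h => by rw [h o (by simp), h i (by simp), h j (by simp)])
    (fun _ => Classical.arbitrary E)]
  refine lintegral_congr fun a => ?_
  have hprod : Measurable fun r : ι → E => ∏ k ∈ {i, j}, g k (r o) (r k) :=
    Finset.measurable_prod _ fun k hk => (hg k (by grind)).comp_eval_eval o k
  rw [lmarginal_insert _ (hFm.fun_mul hprod) (by simpa using hij)]
  refine lintegral_congr fun b => ?_
  rw [lmarginal_singleton]
  simp [hi.symm, hj.symm, hij, prod_pair hij, mul_assoc]

end ProductKernel

theorem lintegral_pi_sum_pairs_mul_product_ansatz {E : Type*} [MeasurableSpace E]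
    [Nonempty E] {μ : Measure E} [SigmaFinite μ] {N : ℕ} [NeZero N] {ρ : E → ℝ≥0∞}
    (hρ : Measurable ρ)
    {g : Fin N → E → E → ℝ≥0∞} (hg : ∀ k, k ≠ 0 → Measurable (uncurry (g k)))
    (hg1 : ∀ k, k ≠ 0 → ∀ᵐ a ∂μ, ∫⁻ t, g k a t ∂μ = 1)
    {w : E → E → ℝ≥0∞} (hw : Measurable (uncurry w)) :
    ∫⁻ r, (∑ i, ∑ j ∈ Ioi i, w (r i) (r j)) *
        (ρ (r 0) * ∏ k ∈ univ.erase 0, g k (r 0) (r k)) ∂(Measure.pi fun _ => μ)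
      = ∑ i ∈ univ.erase 0, ∑ j ∈ Ioi i,
            ∫⁻ a, ∫⁻ b, ∫⁻ c, ρ a * g i a b * g j a c * w b c ∂μ ∂μ ∂μ
        + ∑ j ∈ univ.erase 0, ∫⁻ a, ∫⁻ b, ρ a * g j a b * w a b ∂μ ∂μ := by
  have hterm : ∀ i j : Fin N, Measurable fun r : Fin N → E =>
      (ρ (r 0) * w (r i) (r j)) * ∏ k ∈ univ.erase 0, g k (r 0) (r k) := fun i j =>
    ((hρ.comp (measurable_pi_apply 0)).mul (hw.comp_eval_eval i j)).fun_mul <|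
      Finset.measurable_prod _ fun k hk => (hg k (ne_of_mem_erase hk)).comp_eval_eval 0 k
  have hIoi : Ioi (0 : Fin N) = univ.erase 0 := by
    ext k
    simp [Fin.pos_iff_ne_zero]
  calc _ = ∑ i, ∑ j ∈ Ioi i, ∫⁻ r, (ρ (r 0) * w (r i) (r j)) *
          ∏ k ∈ univ.erase 0, g k (r 0) (r k) ∂(Measure.pi fun _ => μ) := by
        simp_rw [sum_mul, ← mul_assoc, mul_comm (w _ _)]
        rw [lintegral_finsetSum _ fun i _ => Finset.measurable_sum _ fun j _ => hterm i j]
        simp_rw [lintegral_finsetSum _ fun j _ => hterm _ j]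
    _ = _ := by
        rw [← add_sum_erase _ _ (mem_univ 0), add_comm, hIoi]
        congr 1
        · refine sum_congr rfl fun i hi => sum_congr rfl fun j hj => ?_
          have hi0 := ne_of_mem_erase hi
          have hij := mem_Ioi.1 hj
          refine (lintegral_pi_eval₃_mul_prod hg hg1 hi0 ((Fin.zero_le i).trans_lt hij).ne'
            hij.ne (F := fun a b c => ρ a * w b c)
            ((hρ.comp measurable_fst).mul (hw.comp measurable_snd))).trans ?_
          refine lintegral_congr fun a => lintegral_congr fun b => lintegral_congr fun c => ?_
          ring
        · refine sum_congr rfl fun j hj => ?_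
          refine (lintegral_pi_eval₂_mul_prod hg hg1 (ne_of_mem_erase hj)
            (F := fun a b => ρ a * w a b) ((hρ.comp measurable_fst).mul hw)).trans ?_
          refine lintegral_congr fun a => lintegral_congr fun b => ?_
          ring

theorem coulomb_cost_of_product_ansatz_general
    (d N : ℕ) [NeZero N]
    (Ω : Set (EuclideanSpace ℝ (Fin d)))
    (ρ : EuclideanSpace ℝ (Fin d) → ℝ≥0∞) (hρ : Measurable ρ)
    (g : Fin N → EuclideanSpace ℝ (Fin d) → EuclideanSpace ℝ (Fin d) → ℝ≥0∞)
    (hgm : ∀ i : Fin N, i ≠ 0 → Measurable (Function.uncurry (g i)))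
    (hg1 : ∀ i : Fin N, i ≠ 0 →
      ∀ᵐ r ∂(volume.restrict Ω), ∫⁻ r' in Ω, g i r r' = 1)
    (γ : (Fin N → EuclideanSpace ℝ (Fin d)) → ℝ≥0∞)
    (hγ : γ = fun r => (ρ (r 0) / (N : ℝ≥0∞)) *
      ∏ i ∈ Finset.univ.erase (0 : Fin N), g i (r 0) (r i))
    (c : (Fin N → EuclideanSpace ℝ (Fin d)) → ℝ≥0∞)
    (hc : c = fun r => ∑ i : Fin N, ∑ j ∈ Finset.Ioi i,
      1 / ENNReal.ofReal ‖r i - r j‖) :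
    (∫⁻ r, c r * γ r ∂(Measure.pi fun _ : Fin N => volume.restrict Ω))
      = (N : ℝ≥0∞)⁻¹ *
        ((∑ i ∈ Finset.univ.erase (0 : Fin N), ∑ j ∈ Finset.Ioi i,
            ∫⁻ r in Ω, ∫⁻ r' in Ω, ∫⁻ r'' in Ω,
              ρ r * g i r r' * g j r r'' / ENNReal.ofReal ‖r' - r''‖) +
          ∑ i ∈ Finset.univ.erase (0 : Fin N),
            ∫⁻ r in Ω, ∫⁻ r' in Ω, ρ r * g i r r' / ENNReal.ofReal ‖r - r'‖) := by
  subst hγ hc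
  have hw : Measurable (uncurry fun a b : EuclideanSpace ℝ (Fin d) =>
      1 / ENNReal.ofReal ‖a - b‖) := by fun_prop
  calc _ = (N : ℝ≥0∞)⁻¹ * ∫⁻ r,
          (∑ i : Fin N, ∑ j ∈ Ioi i, 1 / ENNReal.ofReal ‖r i - r j‖) *
            (ρ (r 0) * ∏ k ∈ univ.erase 0, g k (r 0) (r k))
          ∂(Measure.pi fun _ : Fin N => volume.restrict Ω) := by
        rw [← lintegral_const_mul' _ _ (ENNReal.inv_ne_top.2 (NeZero.ne _))]
        refine lintegral_congr fun r => ?_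
        simp only [div_eq_mul_inv]
        ring
    _ = _ := by
        rw [lintegral_pi_sum_pairs_mul_product_ansatz hρ hgm hg1 hw]
        simp only [mul_one_div]

/-- With `γ(r₁,…,r_N) = (ρ(r₁)/N) ∏_{i=2}^N γ_i(r₁,r_i)` and the Coulomb cost
`c(r₁,…,r_N) = Σ_{i<j} 1/|r_i − r_j|`, the transport cost `∫_{Ω^N} c γ` equals
`(1/N) [ Σ_{2≤i<j≤N} ∫∫∫ ρ(r)γ_i(r,r')γ_j(r,r'')/|r'−r''| + Σ_{i=2}^N ∫∫ ρ(r)γ_i(r,r')/|r−r'| ]`,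
as an identity in `[0,∞]`. -/
theorem coulomb_cost_of_product_ansatz
    (d N : ℕ) [NeZero N] (hd : 1 ≤ d) (hN : 2 ≤ N)
    (Ω : Set (EuclideanSpace ℝ (Fin d))) (hΩm : MeasurableSet Ω)
    (hΩb : Bornology.IsBounded Ω)
    (ρ : EuclideanSpace ℝ (Fin d) → ℝ≥0∞) (hρ : Measurable ρ)
    (hρmass : ∫⁻ x in Ω, ρ x = N)
    (g : Fin N → EuclideanSpace ℝ (Fin d) → EuclideanSpace ℝ (Fin d) → ℝ≥0∞)
    (hgm : ∀ i : Fin N, i ≠ 0 → Measurable (Function.uncurry (g i)))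
    (hg1 : ∀ i : Fin N, i ≠ 0 →
      ∀ᵐ r ∂(volume.restrict Ω), ∫⁻ r' in Ω, g i r r' = 1)
    (hg2 : ∀ i : Fin N, i ≠ 0 →
      ∀ᵐ r' ∂(volume.restrict Ω), ∫⁻ r in Ω, ρ r * g i r r' = ρ r')
    (γ : (Fin N → EuclideanSpace ℝ (Fin d)) → ℝ≥0∞)
    (hγ : γ = fun r => (ρ (r 0) / (N : ℝ≥0∞)) *
      ∏ i ∈ Finset.univ.erase (0 : Fin N), g i (r 0) (r i))
    (c : (Fin N → EuclideanSpace ℝ (Fin d)) → ℝ≥0∞)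
    (hc : c = fun r => ∑ i : Fin N, ∑ j ∈ Finset.Ioi i,
      1 / ENNReal.ofReal ‖r i - r j‖) :
    (∫⁻ r, c r * γ r ∂(Measure.pi fun _ : Fin N => volume.restrict Ω))
      = (N : ℝ≥0∞)⁻¹ *
        ((∑ i ∈ Finset.univ.erase (0 : Fin N), ∑ j ∈ Finset.Ioi i,
            ∫⁻ r in Ω, ∫⁻ r' in Ω, ∫⁻ r'' in Ω,
              ρ r * g i r r' * g j r r'' / ENNReal.ofReal ‖r' - r''‖) +
          ∑ i ∈ Finset.univ.erase (0 : Fin N),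
            ∫⁻ r in Ω, ∫⁻ r' in Ω, ρ r * g i r r' / ENNReal.ofReal ‖r - r'‖) :=
  coulomb_cost_of_product_ansatz_general d N Ω ρ hρ g hgm hg1 γ hγ c hc
end

section
/- Let Γ(μ) denote the set of probability measures on Ω^N all of whose one-dimensional marginals equal μ, and let Γ_sym(μ) ⊆ Γ(μ) be the subset of γ that are symmetric, i.e. (σ_P)_*γ = γ for every permutation P of {1,…,N}. If c : Ω^N → [0,∞] is measurable and symmetric (c ∘ σ_P = c for all permutations P), then inf_{γ ∈ Γ(μ)} ∫_{Ω^N} c dγ = inf_{γ ∈ Γ_sym(μ)} ∫_{Ω^N} c dγ; that is, imposing the symmetry restriction does not alter the optimal value of the multi-marginal optimal transport problem. -/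
open MeasureTheory ENNReal BigOperators

/-- For a measurable symmetric cost `c : Ω^N → [0,∞]`, the infimum of `∫ c dγ` over the set `Γ(μ)`
of probability measures on `Ω^N` with all one-dimensional marginals equal to `μ` coincides with
the infimum over the subset `Γ_sym(μ)` of symmetric such measures. -/
theorem symmetric_restriction_does_not_change_infimum
    {Ω : Type*} [MeasurableSpace Ω] (N : ℕ) (hN : 2 ≤ N)
    (μ : Measure Ω) [IsProbabilityMeasure μ]
    (c : (Fin N → Ω) → ℝ≥0∞) (hc : Measurable c)
    (hsym : ∀ P : Equiv.Perm (Fin N), ∀ r : Fin N → Ω, c (fun i => r (P i)) = c r) :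
    (⨅ γ ∈ {γ : Measure (Fin N → Ω) | IsProbabilityMeasure γ ∧
        ∀ i : Fin N, Measure.map (fun r => r i) γ = μ},
      ∫⁻ x, c x ∂γ)
    = ⨅ γ ∈ {γ : Measure (Fin N → Ω) | IsProbabilityMeasure γ ∧
        (∀ i : Fin N, Measure.map (fun r => r i) γ = μ) ∧
        ∀ P : Equiv.Perm (Fin N), Measure.map (fun (r : Fin N → Ω) i => r (P i)) γ = γ},
      ∫⁻ x, c x ∂γ := by
  classical
  apply le_antisymm
  · exact le_iInf₂ fun γ hγ => iInf₂_le γ ⟨hγ.1, hγ.2.1⟩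
  · refine le_iInf₂ fun γ hγ => ?_
    obtain ⟨hprob, hmarg⟩ := hγ
    set σ : Equiv.Perm (Fin N) → (Fin N → Ω) → (Fin N → Ω) := fun P r i => r (P i) with hσ
    have hσm : ∀ P, Measurable (σ P) := fun P =>
      measurable_pi_lambda _ fun i => measurable_pi_apply _
    have hσcomp : ∀ P Q : Equiv.Perm (Fin N), σ Q ∘ σ P = σ (P * Q) := by
      intro P Q; funext r; funext i; rfl
    set γs : Measure (Fin N → Ω) :=
      ((N.factorial : ℝ≥0∞)⁻¹) • ∑ P : Equiv.Perm (Fin N), γ.map (σ P) with hγs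
    have hfac0 : (N.factorial : ℝ≥0∞) ≠ 0 := Nat.cast_ne_zero.2 (Nat.factorial_ne_zero N)
    have hfact : (N.factorial : ℝ≥0∞) ≠ ⊤ := natCast_ne_top _
    have hcard : (Fintype.card (Equiv.Perm (Fin N)) : ℝ≥0∞) = (N.factorial : ℝ≥0∞) := by
      rw [Fintype.card_perm, Fintype.card_fin]
    -- γs applied to a measurable set
    have happ : ∀ s : Set (Fin N → Ω), MeasurableSet s →
        γs s = (N.factorial : ℝ≥0∞)⁻¹ * ∑ P : Equiv.Perm (Fin N), γ (σ P ⁻¹' s) := by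
      intro s hs
      rw [hγs, Measure.smul_apply, Measure.finset_sum_apply]
      simp only [smul_eq_mul]
      congr 1
      exact Finset.sum_congr rfl fun P _ => Measure.map_apply (hσm P) hs
    have hcancel : ∀ x : ℝ≥0∞,
        (N.factorial : ℝ≥0∞)⁻¹ * ((N.factorial : ℝ≥0∞) * x) = x := by
      intro x
      rw [← mul_assoc, ENNReal.inv_mul_cancel hfac0 hfact, one_mul]
    have hprob' : IsProbabilityMeasure γs := by
      constructor
      rw [happ Set.univ MeasurableSet.univ]
      have : ∀ P : Equiv.Perm (Fin N), γ (σ P ⁻¹' Set.univ) = 1 := by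
        intro P; simp [hprob.measure_univ]
      rw [Finset.sum_congr rfl fun P _ => this P]
      simp only [Finset.sum_const, Finset.card_univ, nsmul_eq_mul, mul_one]
      rw [hcard, ENNReal.inv_mul_cancel hfac0 hfact]
    have hmarg' : ∀ i : Fin N, Measure.map (fun r => r i) γs = μ := by
      intro i
      ext s hs
      rw [Measure.map_apply (measurable_pi_apply i) hs, happ _ ((measurable_pi_apply i) hs)]
      have : ∀ P : Equiv.Perm (Fin N),
          γ (σ P ⁻¹' ((fun r : Fin N → Ω => r i) ⁻¹' s)) = μ s := by
        intro P
        have : σ P ⁻¹' ((fun r : Fin N → Ω => r i) ⁻¹' s)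
            = (fun r : Fin N → Ω => r (P i)) ⁻¹' s := rfl
        rw [this, ← Measure.map_apply (measurable_pi_apply (P i)) hs, hmarg (P i)]
      rw [Finset.sum_congr rfl fun P _ => this P]
      simp only [Finset.sum_const, Finset.card_univ, nsmul_eq_mul]
      rw [hcard, hcancel]
    have hsymm' : ∀ Q : Equiv.Perm (Fin N),
        Measure.map (fun (r : Fin N → Ω) i => r (Q i)) γs = γs := by
      intro Q
      ext s hs
      have hQs : MeasurableSet (σ Q ⁻¹' s) := (hσm Q) hs
      rw [show (fun (r : Fin N → Ω) i => r (Q i)) = σ Q from rfl,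
        Measure.map_apply (hσm Q) hs, happ _ hQs, happ s hs]
      congr 1
      have key : ∀ P : Equiv.Perm (Fin N), σ P ⁻¹' (σ Q ⁻¹' s) = σ (P * Q) ⁻¹' s := by
        intro P
        rw [← Set.preimage_comp, hσcomp P Q]
      rw [Finset.sum_congr rfl fun P _ => congrArg γ (key P)]
      exact Fintype.sum_equiv (Equiv.mulRight Q) _ _ fun P => rfl
    have hint : ∫⁻ x, c x ∂γs = ∫⁻ x, c x ∂γ := by
      rw [hγs, lintegral_smul_measure, lintegral_finset_sum_measure]
      have : ∀ P : Equiv.Perm (Fin N), ∫⁻ x, c x ∂(γ.map (σ P)) = ∫⁻ x, c x ∂γ := by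
        intro P
        rw [lintegral_map hc (hσm P)]
        exact lintegral_congr fun r => hsym P r
      rw [Finset.sum_congr rfl fun P _ => this P]
      simp only [Finset.sum_const, Finset.card_univ, nsmul_eq_mul, smul_eq_mul]
      rw [hcard, hcancel]
    calc (⨅ γ ∈ {γ : Measure (Fin N → Ω) | IsProbabilityMeasure γ ∧
          (∀ i : Fin N, Measure.map (fun r => r i) γ = μ) ∧
          ∀ P : Equiv.Perm (Fin N), Measure.map (fun (r : Fin N → Ω) i => r (P i)) γ = γ},
        ∫⁻ x, c x ∂γ) ≤ ∫⁻ x, c x ∂γs := iInf₂_le γs ⟨hprob', hmarg', hsymm'⟩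
      _ = ∫⁻ x, c x ∂γ := hint
end

section
/- Let {Z^(k)} be the exact PBCD sequence with Z^(0) ∈ S^{N−1}. Then Σ_{k=0}^∞ Σ_{i=2}^N ‖X_i^(k+1) − X_i^(k)‖_F² ≤ (2/σ)( f_β(Z^(0)) − min_{Z ∈ S^{N−1}} f_β(Z) ) < ∞; in particular ‖Z^(k+1) − Z^(k)‖_F → 0 as k → ∞. -/
open Matrix Finset Filter Topology

noncomputable section

/-- Trace inner product `⟨A,B⟩ = Tr(AᵀB)` on `K×K` real matrices. -/
def mip {K : ℕ} (A B : Matrix (Fin K) (Fin K) ℝ) : ℝ := (Aᵀ * B).trace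

/-- The section `S = {W : We = 𝟙, WᵀΞϱ = ϱ, Tr W = 0, W ≥ 0}` of the feasible region. -/
def Sset {K : ℕ} (e ϱ : Fin K → ℝ) : Set (Matrix (Fin K) (Fin K) ℝ) :=
  {W | W.mulVec e = (fun _ => 1) ∧ Wᵀ.mulVec (fun j => e j * ϱ j) = ϱ ∧
    W.trace = 0 ∧ ∀ a b, 0 ≤ W a b}

/-- The discretized repulsive energy
`f(Z) = Σ_i ⟨X_i, ΛΞCΞ⟩ + Σ_{i<j} ⟨X_i, ΞΛX_jΞCΞ⟩` (blocks indexed by `Fin m`, `m = N−1`). -/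
def fE {K m : ℕ} (e ϱ : Fin K → ℝ) (C : Matrix (Fin K) (Fin K) ℝ)
    (Z : Fin m → Matrix (Fin K) (Fin K) ℝ) : ℝ :=
  (∑ i, mip (Z i) (diagonal ϱ * diagonal e * C * diagonal e)) +
    ∑ i, ∑ j ∈ Finset.Ioi i,
      mip (Z i) (diagonal e * diagonal ϱ * Z j * diagonal e * C * diagonal e)

/-- The `ℓ₁`-penalized energy `f_β(Z) = f(Z) + β Σ_{i<j} ⟨X_i, X_j⟩`. -/
def fB {K m : ℕ} (e ϱ : Fin K → ℝ) (C : Matrix (Fin K) (Fin K) ℝ) (β : ℝ)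
    (Z : Fin m → Matrix (Fin K) (Fin K) ℝ) : ℝ :=
  fE e ϱ C Z + β * ∑ i, ∑ j ∈ Finset.Ioi i, mip (Z i) (Z j)

/-- The block gradient
`∇_{X_i} f_β(Z) = ΛΞCΞ + Σ_{j<i} ΛΞX_jΞCΞ + Σ_{j>i} ΞΛX_jΞCΞ + β Σ_{j≠i} X_j`. -/
def gradB {K m : ℕ} (e ϱ : Fin K → ℝ) (C : Matrix (Fin K) (Fin K) ℝ) (β : ℝ)
    (Z : Fin m → Matrix (Fin K) (Fin K) ℝ) (i : Fin m) : Matrix (Fin K) (Fin K) ℝ :=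
  diagonal ϱ * diagonal e * C * diagonal e
    + ∑ j ∈ Finset.Iio i, diagonal ϱ * diagonal e * Z j * diagonal e * C * diagonal e
    + ∑ j ∈ Finset.Ioi i, diagonal e * diagonal ϱ * Z j * diagonal e * C * diagonal e
    + β • ∑ j ∈ Finset.univ.erase i, Z j

/-- `Z* ∈ S^{N−1}` is a KKT point of the penalized problem `(P_β)` if
`⟨∇_{X_i} f_β(Z*), X − X*_i⟩ ≥ 0` for all `X ∈ S` and all blocks `i`. -/
def IsKKT {K m : ℕ} (e ϱ : Fin K → ℝ) (C : Matrix (Fin K) (Fin K) ℝ) (β : ℝ)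
    (Z : Fin m → Matrix (Fin K) (Fin K) ℝ) : Prop :=
  (∀ i, Z i ∈ Sset e ϱ) ∧
    ∀ i, ∀ X ∈ Sset e ϱ, 0 ≤ mip (gradB e ϱ C β Z i) (X - Z i)

/-- The `i`-th block objective of PBCD at outer iterate `Zold` (with the already-updated
blocks taken from `Znew`):
`X ↦ f_β(Znew_{<i}, X, Zold_{>i}) + (σ/2)‖X − Zold_i‖_F²`. -/
def blockObj {K m : ℕ} (e ϱ : Fin K → ℝ) (C : Matrix (Fin K) (Fin K) ℝ) (β σ : ℝ)
    (Zold Znew : Fin m → Matrix (Fin K) (Fin K) ℝ) (i : Fin m)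
    (X : Matrix (Fin K) (Fin K) ℝ) : ℝ :=
  fB e ϱ C β (fun j => if j < i then Znew j else if j = i then X else Zold j)
    + σ / 2 * mip (X - Zold i) (X - Zold i)

/-- `Zseq` is an exact PBCD sequence: for every `k` and every block `i` (in order),
`X_i^{(k+1)}` is the (unique) global solution of the `i`-th block problem. -/
def IsPBCD {K m : ℕ} (e ϱ : Fin K → ℝ) (C : Matrix (Fin K) (Fin K) ℝ) (β σ : ℝ)
    (Zseq : ℕ → Fin m → Matrix (Fin K) (Fin K) ℝ) : Prop :=
  ∀ k i, Zseq (k + 1) i ∈ Sset e ϱ ∧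
    ∀ X ∈ Sset e ϱ,
      blockObj e ϱ C β σ (Zseq k) (Zseq (k + 1)) i (Zseq (k + 1) i) ≤
        blockObj e ϱ C β σ (Zseq k) (Zseq (k + 1)) i X

/-- `Zbar` is the block-optimal sequence of `Zseq`: `X̄_i^{(k+1)}` is the (unique) global
solution of the `i`-th block problem built from the iterates of `Zseq` themselves. -/
def IsBlockOpt {K m : ℕ} (e ϱ : Fin K → ℝ) (C : Matrix (Fin K) (Fin K) ℝ) (β σ : ℝ)
    (Zseq Zbar : ℕ → Fin m → Matrix (Fin K) (Fin K) ℝ) : Prop :=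
  ∀ k i, Zbar (k + 1) i ∈ Sset e ϱ ∧
    ∀ X ∈ Sset e ϱ,
      blockObj e ϱ C β σ (Zseq k) (Zseq (k + 1)) i (Zbar (k + 1) i) ≤
        blockObj e ϱ C β σ (Zseq k) (Zseq (k + 1)) i X

/-- Frobenius norm of a block tuple `Z ∈ (ℝ^{K×K})^m`. -/
def nZ {K m : ℕ} (Z : Fin m → Matrix (Fin K) (Fin K) ℝ) : ℝ :=
  Real.sqrt (∑ i, mip (Z i) (Z i))

lemma mip_eq_sum {K : ℕ} (A B : Matrix (Fin K) (Fin K) ℝ) :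
    mip A B = ∑ b, ∑ a, A a b * B a b := by
  simp [mip, Matrix.trace, Matrix.mul_apply, Matrix.diag]

lemma mip_self_nonneg {K : ℕ} (A : Matrix (Fin K) (Fin K) ℝ) : 0 ≤ mip A A := by
  rw [mip_eq_sum]
  exact Finset.sum_nonneg fun b _ => Finset.sum_nonneg fun a _ => mul_self_nonneg _

lemma mip_nonneg {K : ℕ} {A B : Matrix (Fin K) (Fin K) ℝ}
    (hA : ∀ a b, 0 ≤ A a b) (hB : ∀ a b, 0 ≤ B a b) : 0 ≤ mip A B := by
  rw [mip_eq_sum]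
  exact Finset.sum_nonneg fun b _ => Finset.sum_nonneg fun a _ =>
    mul_nonneg (hA a b) (hB a b)

lemma mul_entry_nonneg {K : ℕ} {A B : Matrix (Fin K) (Fin K) ℝ}
    (hA : ∀ a b, 0 ≤ A a b) (hB : ∀ a b, 0 ≤ B a b) : ∀ a b, 0 ≤ (A * B) a b := by
  intro a b
  rw [Matrix.mul_apply]
  exact Finset.sum_nonneg fun c _ => mul_nonneg (hA a c) (hB c b)

lemma diagonal_entry_nonneg {K : ℕ} {d : Fin K → ℝ} (hd : ∀ a, 0 ≤ d a) :
    ∀ a b, 0 ≤ (diagonal d : Matrix (Fin K) (Fin K) ℝ) a b := by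
  intro a b
  rcases eq_or_ne a b with rfl | h
  · simpa using hd a
  · simp [Matrix.diagonal_apply_ne _ h]

lemma fB_nonneg {K m : ℕ} {e ϱ : Fin K → ℝ} (he : ∀ a, 0 ≤ e a) (hϱ : ∀ a, 0 ≤ ϱ a)
    {C : Matrix (Fin K) (Fin K) ℝ} (hC0 : ∀ a b, 0 ≤ C a b) {β : ℝ} (hβ : 0 ≤ β)
    {Z : Fin m → Matrix (Fin K) (Fin K) ℝ} (hZ : ∀ i, Z i ∈ Sset e ϱ) :
    0 ≤ fB e ϱ C β Z := by
  have hZ0 : ∀ i, ∀ a b, 0 ≤ Z i a b := fun i => (hZ i).2.2.2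
  have hde := diagonal_entry_nonneg (K := K) he
  have hdϱ := diagonal_entry_nonneg (K := K) hϱ
  have h1 : 0 ≤ fE e ϱ C Z := by
    apply add_nonneg
    · exact Finset.sum_nonneg fun i _ => mip_nonneg (hZ0 i)
        (mul_entry_nonneg (mul_entry_nonneg (mul_entry_nonneg hdϱ hde) hC0) hde)
    · exact Finset.sum_nonneg fun i _ => Finset.sum_nonneg fun j _ =>
        mip_nonneg (hZ0 i)
          (mul_entry_nonneg (mul_entry_nonneg (mul_entry_nonneg
            (mul_entry_nonneg (mul_entry_nonneg hde hdϱ) (hZ0 j)) hde) hC0) hde)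
  have h2 : 0 ≤ β * ∑ i, ∑ j ∈ Finset.Ioi i, mip (Z i) (Z j) := by
    apply mul_nonneg hβ
    exact Finset.sum_nonneg fun i _ => Finset.sum_nonneg fun j _ =>
      mip_nonneg (hZ0 i) (hZ0 j)
  exact add_nonneg h1 h2

/-- Along the exact PBCD sequence started in `S^{N−1}`,
`Σ_{k=0}^∞ Σ_i ‖X_i^{(k+1)} − X_i^{(k)}‖_F² ≤ (2/σ)(f_β(Z^{(0)}) − min_{S^{N−1}} f_β) < ∞`;
in particular `‖Z^{(k+1)} − Z^{(k)}‖_F → 0`. -/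
theorem pbcd_square_summable_differences
    (K N : ℕ) (hK : 1 ≤ K) (hN : 3 ≤ N)
    (e ϱ : Fin K → ℝ) (he : ∀ a, 0 < e a) (hϱ : ∀ a, 0 ≤ ϱ a)
    (C : Matrix (Fin K) (Fin K) ℝ) (hCsym : Cᵀ = C)
    (hC0 : ∀ a b, 0 ≤ C a b) (hCd : ∀ a, C a a = 0)
    (hS : (Sset e ϱ).Nonempty)
    (β σ : ℝ) (hβ : 0 < β) (hσ : 0 < σ)
    (Zseq : ℕ → Fin (N - 1) → Matrix (Fin K) (Fin K) ℝ)
    (hZ0 : ∀ i, Zseq 0 i ∈ Sset e ϱ)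
    (hPBCD : IsPBCD e ϱ C β σ Zseq) :
    Summable (fun k : ℕ =>
      ∑ i, mip (Zseq (k + 1) i - Zseq k i) (Zseq (k + 1) i - Zseq k i)) ∧
    (∑' k : ℕ, ∑ i, mip (Zseq (k + 1) i - Zseq k i) (Zseq (k + 1) i - Zseq k i)) ≤
      2 / σ * (fB e ϱ C β (Zseq 0) -
        sInf (fB e ϱ C β ''
          {Z : Fin (N - 1) → Matrix (Fin K) (Fin K) ℝ | ∀ i, Z i ∈ Sset e ϱ})) ∧
    Tendsto (fun k : ℕ => nZ (Zseq (k + 1) - Zseq k)) atTop (nhds 0) := by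
  -- all iterates stay in S
  have hmem : ∀ k i, Zseq k i ∈ Sset e ϱ := by
    intro k
    induction k with
    | zero => exact hZ0
    | succ n ih => exact fun i => (hPBCD n i).1
  -- the per-step total square-difference
  set D : ℕ → ℝ := fun k => ∑ i, mip (Zseq (k + 1) i - Zseq k i) (Zseq (k + 1) i - Zseq k i)
    with hD
  have hDnonneg : ∀ k, 0 ≤ D k :=
    fun k => Finset.sum_nonneg fun i _ => mip_self_nonneg _
  -- sufficient decrease over one outer iteration
  have hdec : ∀ k, fB e ϱ C β (Zseq (k + 1)) + σ / 2 * D k ≤ fB e ϱ C β (Zseq k) := by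
    intro k
    set W : ℕ → Fin (N - 1) → Matrix (Fin K) (Fin K) ℝ :=
      fun t j => if (j : ℕ) < t then Zseq (k + 1) j else Zseq k j with hW
    have hW0 : W 0 = Zseq k := by
      funext j; simp [hW]
    have hWm : W (N - 1) = Zseq (k + 1) := by
      funext j; simp [hW, j.isLt]
    -- per-block inequality
    have hblock : ∀ i : Fin (N - 1),
        fB e ϱ C β (W ((i : ℕ) + 1)) + σ / 2 *
          mip (Zseq (k + 1) i - Zseq k i) (Zseq (k + 1) i - Zseq k i)
          ≤ fB e ϱ C β (W (i : ℕ)) := by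
      intro i
      have h := (hPBCD k i).2 (Zseq k i) (hmem k i)
      have e1 : (fun j => if j < i then Zseq (k + 1) j else if j = i
          then Zseq (k + 1) i else Zseq k j) = W ((i : ℕ) + 1) := by
        funext j
        by_cases h1 : j < i
        · have : (j : ℕ) < (i : ℕ) + 1 := by
            have := (Fin.lt_def).mp h1; omega
          simp [hW, h1, this]
        · by_cases h2 : j = i
          · subst h2; simp [hW]
          · have hji : ¬ (j : ℕ) < (i : ℕ) + 1 := by
              have h1' : ¬ (j : ℕ) < (i : ℕ) := fun hc => h1 (Fin.lt_def.mpr hc)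
              have h2' : (j : ℕ) ≠ (i : ℕ) := fun hc => h2 (Fin.ext hc)
              omega
            simp [hW, h1, h2, hji]
      have e2 : (fun j => if j < i then Zseq (k + 1) j else if j = i
          then Zseq k i else Zseq k j) = W (i : ℕ) := by
        funext j
        by_cases h1 : j < i
        · simp [hW, h1, (Fin.lt_def).mp h1]
        · have h1' : ¬ (j : ℕ) < (i : ℕ) := fun hc => h1 (Fin.lt_def.mpr hc)
          by_cases h2 : j = i
          · subst h2; simp [hW, h1']
          · simp [hW, h1, h2, h1']
      have e3 : mip (Zseq k i - Zseq k i) (Zseq k i - Zseq k i) = 0 := by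
        simp [mip]
      unfold blockObj at h
      rw [e1] at h
      rw [e2] at h
      rw [e3] at h
      linarith [h]
    -- telescope over blocks
    have htel : ∀ t, t ≤ N - 1 →
        fB e ϱ C β (W t) + σ / 2 *
          ∑ i ∈ Finset.univ.filter (fun i : Fin (N - 1) => (i : ℕ) < t),
            mip (Zseq (k + 1) i - Zseq k i) (Zseq (k + 1) i - Zseq k i)
          ≤ fB e ϱ C β (W 0) := by
      intro t
      induction t with
      | zero => intro _; simp
      | succ t ih =>
        intro ht
        have ht' : t < N - 1 := ht
        have iht := ih (Nat.le_of_lt ht')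
        set i : Fin (N - 1) := ⟨t, ht'⟩ with hi
        have hfilter : Finset.univ.filter (fun j : Fin (N - 1) => (j : ℕ) < t + 1) =
            insert i (Finset.univ.filter (fun j : Fin (N - 1) => (j : ℕ) < t)) := by
          ext j
          simp only [Finset.mem_filter, Finset.mem_insert, Finset.mem_univ, true_and]
          constructor
          · intro hj
            rcases Nat.lt_succ_iff_lt_or_eq.mp hj with h | h
            · exact Or.inr h
            · exact Or.inl (Fin.ext h)
          · rintro (rfl | hj)
            · exact Nat.lt_succ_self t
            · exact Nat.lt_succ_of_lt hj
        have hnotmem : i ∉ Finset.univ.filter (fun j : Fin (N - 1) => (j : ℕ) < t) := by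
          simp [hi]
        rw [hfilter, Finset.sum_insert hnotmem]
        have hb := hblock i
        have hWi : W ((i : ℕ) + 1) = W (t + 1) := by simp [hi]
        have hWi' : W (i : ℕ) = W t := by simp [hi]
        rw [hWi, hWi'] at hb
        nlinarith [hb, iht]
    have := htel (N - 1) le_rfl
    rw [hWm, hW0] at this
    have hfil : Finset.univ.filter (fun i : Fin (N - 1) => (i : ℕ) < N - 1) =
        (Finset.univ : Finset (Fin (N - 1))) :=
      Finset.filter_true_of_mem fun i _ => i.isLt
    rw [hfil] at this
    exact this
  -- lower bound via the infimum
  set I : ℝ := sInf (fB e ϱ C β ''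
    {Z : Fin (N - 1) → Matrix (Fin K) (Fin K) ℝ | ∀ i, Z i ∈ Sset e ϱ}) with hI
  have hbdd : BddBelow (fB e ϱ C β ''
      {Z : Fin (N - 1) → Matrix (Fin K) (Fin K) ℝ | ∀ i, Z i ∈ Sset e ϱ}) := by
    refine ⟨0, ?_⟩
    rintro x ⟨Z, hZ, rfl⟩
    exact fB_nonneg (fun a => (he a).le) hϱ hC0 hβ.le hZ
  have hIle : ∀ k, I ≤ fB e ϱ C β (Zseq k) := by
    intro k
    exact csInf_le hbdd ⟨Zseq k, fun i => hmem k i, rfl⟩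
  -- partial sums are bounded
  have hpartial : ∀ n, ∑ k ∈ Finset.range n, D k ≤
      2 / σ * (fB e ϱ C β (Zseq 0) - I) := by
    intro n
    have hsum : σ / 2 * ∑ k ∈ Finset.range n, D k ≤
        fB e ϱ C β (Zseq 0) - fB e ϱ C β (Zseq n) := by
      induction n with
      | zero => simp
      | succ n ih =>
        rw [Finset.sum_range_succ]
        have := hdec n
        nlinarith
    have hIn := hIle n
    have hσ2 : 0 < σ / 2 := by positivity
    rw [← sub_nonneg] at hIn
    have : σ / 2 * ∑ k ∈ Finset.range n, D k ≤ fB e ϱ C β (Zseq 0) - I := by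
      linarith
    calc ∑ k ∈ Finset.range n, D k
        = 2 / σ * (σ / 2 * ∑ k ∈ Finset.range n, D k) := by
          field_simp
      _ ≤ 2 / σ * (fB e ϱ C β (Zseq 0) - I) := by
          apply mul_le_mul_of_nonneg_left this
          positivity
  have hsummable : Summable D :=
    summable_of_sum_range_le hDnonneg hpartial
  refine ⟨hsummable, ?_, ?_⟩
  · exact Real.tsum_le_of_sum_range_le hDnonneg hpartial
  · have hD0 : Tendsto D atTop (nhds 0) := hsummable.tendsto_atTop_zero
    have heq : (fun k : ℕ => nZ (Zseq (k + 1) - Zseq k)) = fun k => Real.sqrt (D k) := by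
      funext k
      simp only [nZ, hD]
      rfl
    rw [heq]
    have := (Real.continuous_sqrt.tendsto 0).comp hD0
    rw [Real.sqrt_zero] at this
    exact this
end
end
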